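/- Let P be a poset with least element 0 and Z(P)^× ≠ ∅. If the vertex set of the reduced zero-divisor graph Γ_E(P) is infinite, then every vertex of Γ_E(P) that is an annihilator prime ideal has infinite degree in Γ_E(P); that is, if z ∈ Z(P)^× is such that ann(z) is an annihilator prime ideal of P, then the neighborhood of [z] in Γ_E(P) is infinite. -/

import Mathlib

/-- `L(x,y) = {z : z ≤ x ∧ z ≤ y}`, where the least element `0` of the poset is `⊥`. -/
def LSet (P : Type*) [PartialOrder P] [OrderBot P] (x y : P) : Set P := {z | z ≤ x ∧ z ≤ y}

theorem LSet_comm (P : Type*) [PartialOrder P] [OrderBot P] (x y : P) :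
    LSet P x y = LSet P y x := by
  ext z; exact ⟨fun h => ⟨h.2, h.1⟩, fun h => ⟨h.2, h.1⟩⟩

/-- The annihilator of `x`: `ann(x) = {y : L(x,y) = {0}}`. -/
def ann (P : Type*) [PartialOrder P] [OrderBot P] (x : P) : Set P := {y | LSet P x y = {⊥}}

theorem mem_ann_comm (P : Type*) [PartialOrder P] [OrderBot P] (x y : P) :
    y ∈ ann P x ↔ x ∈ ann P y := by
  simp only [ann, Set.mem_setOf_eq, LSet_comm P x y]

/-- The set `Z(P)^× = Z(P) \ {0}` of nonzero zero-divisors of `P`. -/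
def ZDivX (P : Type*) [PartialOrder P] [OrderBot P] : Set P :=
  {x | x ≠ ⊥ ∧ ∃ y : P, y ≠ ⊥ ∧ LSet P x y = {⊥}}

/-- The zero-divisor graph `Γ(P)` on `Z(P)^×`. -/
def zdGraph (P : Type*) [PartialOrder P] [OrderBot P] : SimpleGraph (ZDivX P) where
  Adj a b := (a : P) ≠ (b : P) ∧ LSet P a b = {⊥}
  symm := by
    constructor
    rintro a b ⟨h1, h2⟩
    exact ⟨fun h => h1 h.symm, by rw [LSet_comm]; exact h2⟩
  loopless := by constructor; rintro a ⟨h1, _⟩; exact h1 rfl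

/-- The equivalence `x ∼ y ↔ ann(x) = ann(y)` on `Z(P)^×`. -/
def annSetoid (P : Type*) [PartialOrder P] [OrderBot P] : Setoid (ZDivX P) where
  r a b := ann P a = ann P b
  iseqv := ⟨fun _ => rfl, Eq.symm, Eq.trans⟩

/-- The reduced zero-divisor graph `Γ_E(P)`, on equivalence classes of `Z(P)^×`. -/
def redGraph (P : Type*) [PartialOrder P] [OrderBot P] :
    SimpleGraph (Quotient (annSetoid P)) where
  Adj := Quotient.lift₂ (fun a b => LSet P (a : P) (b : P) = {⊥}) (by
    intro a b a' b' ha hb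
    have ha' : ann P (a : P) = ann P (a' : P) := ha
    have hb' : ann P (b : P) = ann P (b' : P) := hb
    apply propext
    constructor
    · intro h
      have h1 : (b : P) ∈ ann P (a : P) := h
      rw [ha', mem_ann_comm, hb', mem_ann_comm] at h1
      exact h1
    · intro h
      have h1 : (b' : P) ∈ ann P (a' : P) := h
      rw [← ha', mem_ann_comm, ← hb', mem_ann_comm] at h1
      exact h1)
  symm := by
    constructor
    intro x y
    refine Quotient.inductionOn₂ x y ?_
    intro a b h
    have h' : LSet P (a : P) (b : P) = {⊥} := h
    show LSet P (b : P) (a : P) = {⊥}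
    rw [LSet_comm]; exact h'
  loopless := by
    constructor
    intro x
    refine Quotient.inductionOn x ?_
    intro a h
    have h' : LSet P (a : P) (a : P) = {⊥} := h
    have hm : (a : P) ∈ LSet P (a : P) (a : P) := ⟨le_refl _, le_refl _⟩
    rw [h'] at hm
    exact a.2.1 hm
/-- `I` is an ideal of the poset `P`: a nonempty downward-closed subset. -/
def IsIdeal (P : Type*) [PartialOrder P] [OrderBot P] (I : Set P) : Prop :=
  I.Nonempty ∧ ∀ x ∈ I, ∀ y : P, y ≤ x → y ∈ I

/-- `I` is a prime ideal of the poset `P`: a proper ideal such that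
`L(x,y) ⊆ I` implies `x ∈ I` or `y ∈ I`. -/
def IsPrimeIdeal (P : Type*) [PartialOrder P] [OrderBot P] (I : Set P) : Prop :=
  IsIdeal P I ∧ I ≠ Set.univ ∧ ∀ x y : P, LSet P x y ⊆ I → x ∈ I ∨ y ∈ I

/-- The family `𝔄 = {ann(x) : x ∈ P \ {0}}`. -/
def AnnFam (P : Type*) [PartialOrder P] [OrderBot P] : Set (Set P) :=
  {I | ∃ x : P, x ≠ ⊥ ∧ ann P x = I}

/-- `Ann(P)`, the set of annihilator prime ideals of `P`. -/
def AnnPrimes (P : Type*) [PartialOrder P] [OrderBot P] : Set (Set P) :=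
  {I | IsPrimeIdeal P I ∧ ∃ x : P, ann P x = I}

/-- `P` satisfies the ACC for annihilators: every nonempty subfamily of `𝔄` has a
maximal element. -/
def ACCAnn (P : Type*) [PartialOrder P] [OrderBot P] : Prop :=
  ∀ S : Set (Set P), S ⊆ AnnFam P → S.Nonempty → ∃ I ∈ S, ∀ J ∈ S, I ⊆ J → I = J

/-! If `[z]` had finitely many neighbours, then, since `ann(z)` is prime, every nonzero
annihilator of a non-neighbour `a` of `[z]` lies in `ann(z)`. So `ann(a)`, hence `[a]`, is
determined by which neighbours of `[z]` are adjacent to `[a]`: there are only finitely many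
non-neighbours of `[z]` either, and `Γ_E(P)` would be finite. -/

theorem SimpleGraph.finite_of_injOn_inter_neighborSet {V : Type*} (G : SimpleGraph V) (v : V)
    (hv : (G.neighborSet v).Finite)
    (hinj : Set.InjOn (fun w => G.neighborSet w ∩ G.neighborSet v) (G.neighborSet v)ᶜ) :
    Finite V := by
  have hcompl : (G.neighborSet v)ᶜ.Finite :=
    Set.Finite.of_finite_image
      (hv.finite_subsets.subset (by rintro _ ⟨w, -, rfl⟩; exact Set.inter_subset_right)) hinj
  exact Set.finite_univ_iff.mp (by simpa using hv.union hcompl)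

section PosetZeroDivisors

variable {P : Type*} [PartialOrder P] [OrderBot P]

theorem bot_mem_ann (x : P) : ⊥ ∈ ann P x := by
  ext w
  simp +contextual [LSet]

theorem IsPrimeIdeal.bot_mem {I : Set P} (hI : IsPrimeIdeal P I) : ⊥ ∈ I :=
  let ⟨x, hx⟩ := hI.1.1
  hI.1.2 x hx ⊥ bot_le

theorem IsPrimeIdeal.ann_subset_of_notMem {I : Set P} (hI : IsPrimeIdeal P I) {x : P}
    (hx : x ∉ I) : ann P x ⊆ I := by
  intro u hu
  have hL : LSet P x u ⊆ I := by
    rw [show LSet P x u = {⊥} from hu]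
    exact Set.singleton_subset_iff.mpr hI.bot_mem
  exact (hI.2.2 x u hL).resolve_left hx

theorem redGraph_adj_mk {a b : ZDivX P} :
    (redGraph P).Adj (Quotient.mk _ a) (Quotient.mk _ b) ↔ (b : P) ∈ ann P a :=
  Iff.rfl

theorem mem_ZDivX_of_mem_ann {x u : P} (hx : x ≠ ⊥) (hu : u ≠ ⊥) (h : u ∈ ann P x) :
    u ∈ ZDivX P :=
  ⟨hu, x, hx, by rw [LSet_comm]; exact h⟩

theorem ann_subset_of_inter_neighborSet_subset (z : ZDivX P) (hz : IsPrimeIdeal P (ann P z))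
    {a b : ZDivX P} (ha : (a : P) ∉ ann P z)
    (hab : (redGraph P).neighborSet (Quotient.mk _ a) ∩ (redGraph P).neighborSet (Quotient.mk _ z)
      ⊆ (redGraph P).neighborSet (Quotient.mk _ b)) :
    ann P a ⊆ ann P b := by
  intro u hu
  by_cases hu0 : u = ⊥
  · exact hu0 ▸ bot_mem_ann _
  have huz : u ∈ ann P z := hz.ann_subset_of_notMem ha hu
  let w : ZDivX P := ⟨u, mem_ZDivX_of_mem_ann z.2.1 hu0 huz⟩
  exact redGraph_adj_mk.mp (hab (show Quotient.mk _ w ∈ _ from ⟨hu, huz⟩))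

theorem redGraph_injOn_inter_neighborSet (z : ZDivX P) (hz : IsPrimeIdeal P (ann P z)) :
    Set.InjOn (fun w => (redGraph P).neighborSet w ∩ (redGraph P).neighborSet (Quotient.mk _ z))
      ((redGraph P).neighborSet (Quotient.mk _ z))ᶜ := by
  intro v hv w hw hvw
  obtain ⟨a, rfl⟩ := Quotient.mk_surjective v
  obtain ⟨b, rfl⟩ := Quotient.mk_surjective w
  have ha : (a : P) ∉ ann P z := hv
  have hb : (b : P) ∉ ann P z := hw
  refine Quotient.sound (Set.Subset.antisymm ?_ ?_)
  · exact ann_subset_of_inter_neighborSet_subset z hz ha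
      (hvw.subset.trans Set.inter_subset_left)
  · exact ann_subset_of_inter_neighborSet_subset z hz hb
      (hvw.symm.subset.trans Set.inter_subset_left)

end PosetZeroDivisors

theorem stmt17_general (P : Type*) [PartialOrder P] [OrderBot P]
    (hinf : Infinite (Quotient (annSetoid P)))
    (z : ZDivX P) (hz : IsPrimeIdeal P (ann P (z : P))) :
    ((redGraph P).neighborSet (Quotient.mk (annSetoid P) z)).Infinite := by
  intro hfin
  have : Finite (Quotient (annSetoid P)) :=
    (redGraph P).finite_of_injOn_inter_neighborSet _ hfin (redGraph_injOn_inter_neighborSet z hz)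
  exact not_finite (Quotient (annSetoid P))

/-- If the vertex set of `Γ_E(P)` is infinite, then every annihilator prime ideal has
infinite degree in `Γ_E(P)`. -/
theorem stmt17 (P : Type*) [PartialOrder P] [OrderBot P] (hZ : (ZDivX P).Nonempty)
    (hinf : Infinite (Quotient (annSetoid P)))
    (z : ZDivX P) (hz : IsPrimeIdeal P (ann P (z : P))) :
    ((redGraph P).neighborSet (Quotient.mk (annSetoid P) z)).Infinite :=
  stmt17_general P hinf z hz
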